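/- Let X be a finite set with |X| = m ≥ 2, let p be a probability mass function on X, and for each x ∈ X let φ_x be an n × n positive semidefinite complex matrix with trace 1. Let σ be any n × n positive semidefinite matrix with trace 1 and let √σ denote its positive semidefinite square root. Define P_opt = sup over all POVMs {Λ_x}_{x∈X} (positive semidefinite matrices with ∑_x Λ_x = I) of ∑_x p(x)·Tr[φ_x Λ_x], and define the fidelity F(φ_x, σ) = Tr[ ( √σ · φ_x · √σ )^{1/2} ], where (·)^{1/2} is the positive semidefinite square root. Then ( ∑_x √(p(x)/m) · F(φ_x, σ) )² ≤ (1/m) · ( √P_opt + √(m − 1) · √(1 − P_opt) )². -/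

import Mathlib

open ComplexOrder

namespace Matrix.PosSemidef
variable {n 𝕜 : Type*} [Fintype n] [RCLike 𝕜] [DecidableEq n] {A : Matrix n n 𝕜}
noncomputable def sqrt (hA : A.PosSemidef) : Matrix n n 𝕜 :=
  hA.1.eigenvectorUnitary.1 * diagonal ((↑) ∘ (√·) ∘ hA.1.eigenvalues) *
    (star hA.1.eigenvectorUnitary : Matrix n n 𝕜)
lemma posSemidef_sqrt (hA : A.PosSemidef) : PosSemidef hA.sqrt := by
  have h := (posSemidef_diagonal_iff.mpr (fun i => by
    simp only [Function.comp_apply, RCLike.ofReal_nonneg]; exact Real.sqrt_nonneg _ :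
      ∀ i, 0 ≤ ((↑) ∘ (√·) ∘ hA.1.eigenvalues : n → 𝕜) i)).mul_mul_conjTranspose_same
    (hA.1.eigenvectorUnitary.1)
  simpa [sqrt, Matrix.star_eq_conjTranspose] using h
end Matrix.PosSemidef

/-!
Fix a POVM `Λ`. A polar decomposition `|M| = Wᴴ M` of `M = √φ √σ` with `W` a contraction,
together with `1 = Λ + (1 - Λ)` inside the trace and Cauchy–Schwarz for the Hilbert–Schmidt
inner product, shows that fidelity does not increase under the two-outcome measurement
`{Λ, 1 - Λ}`: `F(φ, σ) ≤ √(q r) + √((1 - q)(1 - r))` with `q = Tr φΛ`, `r = Tr σΛ`.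
Weighting by `√p(x)`, summing over `x` and applying Cauchy–Schwarz twice, with
`∑ₓ Tr σΛₓ = 1` and `∑ₓ Tr σ(1 - Λₓ) = m - 1`, bounds `∑ₓ √p(x) F(φₓ, σ)` by
`√P + √(m - 1) √(1 - P)`, where `P` is the success probability of `Λ`. This bound is continuous
in `P`, so it passes to the supremum `P_opt`.
-/

open scoped MatrixOrder

lemma le_apply_csSup_of_continuous {α β : Type*} [ConditionallyCompleteLinearOrder α]
    [TopologicalSpace α] [OrderTopology α] [TopologicalSpace β] [Preorder β]
    [OrderClosedTopology β] {S : Set α} {f : α → β} {c : β} (hf : Continuous f)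
    (hne : S.Nonempty) (hbdd : BddAbove S) (h : ∀ r ∈ S, c ≤ f r) : c ≤ f (sSup S) :=
  closure_minimal h (isClosed_le continuous_const hf) (csSup_mem_closure hne hbdd)

lemma Real.sum_sqrt_mul_sqrt_mul_sqrt_add_le {ι : Type*} (s : Finset ι) {p q r : ι → ℝ}
    (hp : ∀ i, 0 ≤ p i) (hq : ∀ i, 0 ≤ q i) (hq' : ∀ i, q i ≤ 1) (hr : ∀ i, 0 ≤ r i)
    (hr' : ∀ i, r i ≤ 1) :
    ∑ i ∈ s, √(p i) * (√(q i) * √(r i) + √(1 - q i) * √(1 - r i)) ≤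
      √(∑ i ∈ s, p i * q i) * √(∑ i ∈ s, r i) +
        √(∑ i ∈ s, p i * (1 - q i)) * √(∑ i ∈ s, (1 - r i)) := by
  have hsplit (i : ι) : √(p i) * (√(q i) * √(r i) + √(1 - q i) * √(1 - r i)) =
      √(p i * q i) * √(r i) + √(p i * (1 - q i)) * √(1 - r i) := by
    rw [Real.sqrt_mul (hp i), Real.sqrt_mul (hp i)]
    ring
  simp only [hsplit, Finset.sum_add_distrib]
  gcongr
  · exact Real.sum_sqrt_mul_sqrt_le s (fun i => mul_nonneg (hp i) (hq i)) hr
  · exact Real.sum_sqrt_mul_sqrt_le s (fun i => mul_nonneg (hp i) (sub_nonneg.mpr (hq' i)))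
      fun i => sub_nonneg.mpr (hr' i)

namespace Matrix

variable {n 𝕜 : Type*} [RCLike 𝕜] [DecidableEq n]

lemma posSemidef_one_sub_of_sum_eq_one {X : Type*} [Fintype X] [DecidableEq X]
    {Λ : X → Matrix n n 𝕜} (hΛ : ∀ x, (Λ x).PosSemidef) (hΛ1 : ∑ x, Λ x = 1) (x : X) :
    (1 - Λ x).PosSemidef := by
  rw [← hΛ1, ← Finset.sum_erase_eq_sub (Finset.mem_univ x)]
  exact posSemidef_sum _ fun y _ => hΛ y

variable [Fintype n]

lemma PosSemidef.sqrt_eq_cfcSqrt {A : Matrix n n 𝕜} (hA : A.PosSemidef) :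
    hA.sqrt = CFC.sqrt A := by
  rw [CFC.sqrt_eq_real_sqrt A hA.nonneg, cfcₙ_eq_cfc, hA.1.cfc_eq, IsHermitian.cfc,
    Unitary.conjStarAlgAut_apply]
  rfl

@[simp]
lemma conjTranspose_cfcSqrt (A : Matrix n n 𝕜) : (CFC.sqrt A)ᴴ = CFC.sqrt A :=
  (nonneg_iff_posSemidef.mp (CFC.sqrt_nonneg A)).isHermitian.eq

lemma PosSemidef.re_trace_mul_nonneg {A B : Matrix n n 𝕜} (hA : A.PosSemidef)
    (hB : B.PosSemidef) : 0 ≤ RCLike.re (A * B).trace := by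
  have h := hA.conjTranspose_mul_mul_same (CFC.sqrt B)
  rw [conjTranspose_cfcSqrt] at h
  rw [← CFC.sqrt_mul_sqrt_self B hB.nonneg, ← mul_assoc, trace_mul_cycle]
  exact (RCLike.nonneg_iff.mp h.trace_nonneg).1

lemma re_trace_conjTranspose_mul_le (X Y : Matrix n n 𝕜) :
    RCLike.re (Xᴴ * Y).trace ≤
      √(RCLike.re (Xᴴ * X).trace) * √(RCLike.re (Yᴴ * Y).trace) := by
  let := toMatrixSeminormedAddCommGroup (1 : Matrix n n 𝕜) PosSemidef.one
  let := toMatrixInnerProductSpace (1 : Matrix n n 𝕜) PosSemidef.one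
  have h := re_inner_le_norm (𝕜 := 𝕜) Xᴴ Yᴴ
  rw [norm_eq_sqrt_re_inner (𝕜 := 𝕜), norm_eq_sqrt_re_inner (𝕜 := 𝕜)] at h
  change RCLike.re (Yᴴ * 1 * Xᴴᴴ).trace ≤
    √(RCLike.re (Xᴴ * 1 * Xᴴᴴ).trace) * √(RCLike.re (Yᴴ * 1 * Yᴴᴴ).trace) at h
  simp only [mul_one, conjTranspose_conjTranspose] at h
  rwa [← RCLike.conj_re, ← RCLike.star_def, ← trace_conjTranspose, conjTranspose_mul,
    conjTranspose_conjTranspose]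

lemma PosSemidef.re_trace_conjTranspose_mul_mul_le {C W : Matrix n n 𝕜} (hC : C.PosSemidef)
    (hW : (1 - W * Wᴴ).PosSemidef) : RCLike.re (Wᴴ * C * W).trace ≤ RCLike.re C.trace := by
  have h := hW.re_trace_mul_nonneg hC
  rwa [sub_mul, one_mul, trace_sub, map_sub, sub_nonneg, mul_assoc, trace_mul_comm] at h

lemma isStarProjection_mul_cfc_inv_mul_conjTranspose (M : Matrix n n 𝕜) :
    IsStarProjection (M * cfc (·⁻¹ : ℝ → ℝ) (Mᴴ * M) * Mᴴ) := by
  have hM : IsSelfAdjoint (Mᴴ * M) := isHermitian_conjTranspose_mul_self M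
  have hcont (f : ℝ → ℝ) : ContinuousOn f (spectrum ℝ (Mᴴ * M)) :=
    (Set.toFinite _).continuousOn f
  have hself : (cfc (·⁻¹ : ℝ → ℝ) (Mᴴ * M))ᴴ = cfc (·⁻¹ : ℝ → ℝ) (Mᴴ * M) :=
    cfc_predicate (p := IsSelfAdjoint) _ _
  have hpinv : cfc (·⁻¹ : ℝ → ℝ) (Mᴴ * M) * (Mᴴ * M) * cfc (·⁻¹ : ℝ → ℝ) (Mᴴ * M) =
      cfc (·⁻¹ : ℝ → ℝ) (Mᴴ * M) := by
    conv_lhs => enter [1, 2]; rw [← cfc_id' ℝ (Mᴴ * M) hM]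
    rw [← cfc_mul _ _ _ (hcont _) (hcont _), ← cfc_mul _ _ _ (hcont _) (hcont _)]
    exact cfc_congr fun t _ => by simpa using mul_inv_mul_cancel t⁻¹
  refine ⟨?_, ?_⟩
  · rw [IsIdempotentElem]
    conv_rhs => rw [← hpinv]
    simp only [mul_assoc]
  · rw [IsSelfAdjoint, star_eq_conjTranspose, conjTranspose_mul, conjTranspose_mul, hself,
      conjTranspose_conjTranspose, mul_assoc]

lemma exists_contraction_conjTranspose_mul_eq_cfcSqrt (M : Matrix n n 𝕜) :
    ∃ W : Matrix n n 𝕜, (1 - W * Wᴴ).PosSemidef ∧ Wᴴ * M = CFC.sqrt (Mᴴ * M) := by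
  have hM : 0 ≤ Mᴴ * M := (posSemidef_conjTranspose_mul_self M).nonneg
  have hcont (f : ℝ → ℝ) : ContinuousOn f (spectrum ℝ (Mᴴ * M)) :=
    (Set.toFinite _).continuousOn f
  -- `W = M G` with `G = |M|⁺`, the Moore–Penrose inverse of `|M| = √(Mᴴ M)`; `0⁻¹ = 0` is used.
  set G := cfc (fun t : ℝ => (√t)⁻¹) (Mᴴ * M)
  have hself : Gᴴ = G := cfc_predicate (p := IsSelfAdjoint) _ _
  have hGG : G * G = cfc (·⁻¹ : ℝ → ℝ) (Mᴴ * M) := by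
    rw [← cfc_mul _ _ _ (hcont _) (hcont _)]
    exact cfc_congr fun t ht => by
      rw [← mul_inv, Real.mul_self_sqrt (spectrum_nonneg_of_nonneg hM ht)]
  have hGM : G * (Mᴴ * M) = CFC.sqrt (Mᴴ * M) := by
    conv_lhs => enter [2]; rw [← cfc_id' ℝ (Mᴴ * M)]
    rw [← cfc_mul _ _ _ (hcont _) (hcont _), CFC.sqrt_eq_real_sqrt _ hM, cfcₙ_eq_cfc]
    exact cfc_congr fun t _ => by rw [inv_mul_eq_div, Real.div_sqrt]
  refine ⟨M * G, ?_, ?_⟩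
  · rw [conjTranspose_mul, hself, mul_assoc, ← mul_assoc G, hGG, ← mul_assoc]
    exact nonneg_iff_posSemidef.mp
      (isStarProjection_mul_cfc_inv_mul_conjTranspose M).one_sub_nonneg
  · rw [conjTranspose_mul, hself, mul_assoc, hGM]

lemma conjTranspose_cfcSqrt_mul_mul_cfcSqrt_mul {E : Matrix n n 𝕜} (hE : E.PosSemidef)
    (A B : Matrix n n 𝕜) : (CFC.sqrt E * A)ᴴ * (CFC.sqrt E * B) = Aᴴ * E * B := by
  rw [conjTranspose_mul, conjTranspose_cfcSqrt, mul_assoc, ← mul_assoc (CFC.sqrt E),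
    CFC.sqrt_mul_sqrt_self E hE.nonneg, ← mul_assoc]

lemma PosSemidef.re_trace_conjTranspose_mul_cfcSqrt_mul_mul_cfcSqrt_le
    {ρ σ E W : Matrix n n 𝕜} (hρ : ρ.PosSemidef) (hσ : σ.PosSemidef) (hE : E.PosSemidef)
    (hW : (1 - W * Wᴴ).PosSemidef) :
    RCLike.re (Wᴴ * CFC.sqrt ρ * E * CFC.sqrt σ).trace ≤
      √(RCLike.re (ρ * E).trace) * √(RCLike.re (σ * E).trace) := by
  have hsqrt (A : Matrix n n 𝕜) (hA : A.PosSemidef) :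
      (CFC.sqrt A * E * CFC.sqrt A).trace = (A * E).trace := by
    rw [trace_mul_cycle, CFC.sqrt_mul_sqrt_self A hA.nonneg]
  have hρE : (CFC.sqrt ρ * E * CFC.sqrt ρ).PosSemidef := by
    simpa using hE.conjTranspose_mul_mul_same (CFC.sqrt ρ)
  have hX : RCLike.re
      ((CFC.sqrt E * (CFC.sqrt ρ * W))ᴴ * (CFC.sqrt E * (CFC.sqrt ρ * W))).trace ≤
        RCLike.re (ρ * E).trace := by
    rw [conjTranspose_cfcSqrt_mul_mul_cfcSqrt_mul hE, conjTranspose_mul, conjTranspose_cfcSqrt,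
      ← hsqrt ρ hρ]
    simpa only [mul_assoc] using hρE.re_trace_conjTranspose_mul_mul_le hW
  have hY :
      ((CFC.sqrt E * CFC.sqrt σ)ᴴ * (CFC.sqrt E * CFC.sqrt σ)).trace = (σ * E).trace := by
    rw [conjTranspose_cfcSqrt_mul_mul_cfcSqrt_mul hE, conjTranspose_cfcSqrt, hsqrt σ hσ]
  calc RCLike.re (Wᴴ * CFC.sqrt ρ * E * CFC.sqrt σ).trace
      = RCLike.re ((CFC.sqrt E * (CFC.sqrt ρ * W))ᴴ * (CFC.sqrt E * CFC.sqrt σ)).trace := by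
        rw [conjTranspose_cfcSqrt_mul_mul_cfcSqrt_mul hE, conjTranspose_mul,
          conjTranspose_cfcSqrt]
    _ ≤ _ := re_trace_conjTranspose_mul_le _ _
    _ ≤ _ := by rw [hY]; gcongr

noncomputable def fidelity (ρ σ : Matrix n n 𝕜) : ℝ :=
  RCLike.re (CFC.sqrt (CFC.sqrt σ * ρ * CFC.sqrt σ)).trace

lemma fidelity_nonneg (ρ σ : Matrix n n 𝕜) : 0 ≤ fidelity ρ σ :=
  (RCLike.nonneg_iff.mp (nonneg_iff_posSemidef.mp (CFC.sqrt_nonneg _)).trace_nonneg).1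

theorem fidelity_le_of_posSemidef_of_posSemidef_one_sub {ρ σ Λ : Matrix n n 𝕜}
    (hρ : ρ.PosSemidef) (hσ : σ.PosSemidef) (hΛ : Λ.PosSemidef) (hΛ' : (1 - Λ).PosSemidef) :
    fidelity ρ σ ≤ √(RCLike.re (ρ * Λ).trace) * √(RCLike.re (σ * Λ).trace) +
      √(RCLike.re (ρ * (1 - Λ)).trace) * √(RCLike.re (σ * (1 - Λ)).trace) := by
  obtain ⟨W, hW, hWM⟩ :=
    exists_contraction_conjTranspose_mul_eq_cfcSqrt (CFC.sqrt ρ * CFC.sqrt σ)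
  have hM : (CFC.sqrt ρ * CFC.sqrt σ)ᴴ * (CFC.sqrt ρ * CFC.sqrt σ) =
      CFC.sqrt σ * ρ * CFC.sqrt σ := by
    rw [conjTranspose_mul, conjTranspose_cfcSqrt, conjTranspose_cfcSqrt, mul_assoc,
      ← mul_assoc (CFC.sqrt ρ), CFC.sqrt_mul_sqrt_self ρ hρ.nonneg, mul_assoc]
  have hsplit : Wᴴ * (CFC.sqrt ρ * CFC.sqrt σ) =
      Wᴴ * CFC.sqrt ρ * Λ * CFC.sqrt σ + Wᴴ * CFC.sqrt ρ * (1 - Λ) * CFC.sqrt σ := by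
    noncomm_ring
  rw [fidelity, ← hM, ← hWM, hsplit, trace_add, map_add]
  exact add_le_add (hρ.re_trace_conjTranspose_mul_cfcSqrt_mul_mul_cfcSqrt_le hσ hΛ hW)
    (hρ.re_trace_conjTranspose_mul_cfcSqrt_mul_mul_cfcSqrt_le hσ hΛ' hW)

lemma re_trace_mul_one_sub {ρ : Matrix n n 𝕜} (hρ : ρ.trace = 1) (E : Matrix n n 𝕜) :
    RCLike.re (ρ * (1 - E)).trace = 1 - RCLike.re (ρ * E).trace := by
  rw [mul_sub, mul_one, trace_sub, hρ, map_sub, RCLike.one_re]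

lemma PosSemidef.re_trace_mul_le_one {ρ E : Matrix n n 𝕜} (hρ : ρ.PosSemidef)
    (hρtr : ρ.trace = 1) (hE : (1 - E).PosSemidef) : RCLike.re (ρ * E).trace ≤ 1 := by
  simpa [re_trace_mul_one_sub hρtr] using hρ.re_trace_mul_nonneg hE

section Ensemble

variable {X : Type*} [Fintype X] {p : X → ℝ} {φ Λ : X → Matrix n n 𝕜}

lemma sum_mul_re_trace_mul_le_one (hp0 : ∀ x, 0 ≤ p x) (hp1 : ∑ x, p x = 1)
    (hφ : ∀ x, (φ x).PosSemidef) (hφtr : ∀ x, (φ x).trace = 1)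
    (hΛ : ∀ x, (Λ x).PosSemidef) (hΛ1 : ∑ x, Λ x = 1) :
    ∑ x, p x * RCLike.re (φ x * Λ x).trace ≤ 1 := by
  classical
  calc ∑ x, p x * RCLike.re (φ x * Λ x).trace ≤ ∑ x, p x * 1 := by
        gcongr with x
        · exact hp0 x
        · exact (hφ x).re_trace_mul_le_one (hφtr x)
            (posSemidef_one_sub_of_sum_eq_one hΛ hΛ1 x)
    _ = 1 := by simp [hp1]

theorem sum_sqrt_mul_fidelity_le (hp0 : ∀ x, 0 ≤ p x) (hp1 : ∑ x, p x = 1)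
    (hφ : ∀ x, (φ x).PosSemidef) (hφtr : ∀ x, (φ x).trace = 1)
    {σ : Matrix n n 𝕜} (hσ : σ.PosSemidef) (hσtr : σ.trace = 1)
    (hΛ : ∀ x, (Λ x).PosSemidef) (hΛ1 : ∑ x, Λ x = 1) :
    ∑ x, √(p x) * fidelity (φ x) σ ≤
      √(∑ x, p x * RCLike.re (φ x * Λ x).trace) +
        √(Fintype.card X - 1) * √(1 - ∑ x, p x * RCLike.re (φ x * Λ x).trace) := by
  classical
  have hΛ' := posSemidef_one_sub_of_sum_eq_one hΛ hΛ1
  set q := fun x => RCLike.re (φ x * Λ x).trace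
  set r := fun x => RCLike.re (σ * Λ x).trace
  have hr : ∑ x, r x = 1 := by
    simp only [r, ← map_sum, ← trace_sum, ← Finset.mul_sum, hΛ1, mul_one, hσtr, RCLike.one_re]
  calc ∑ x, √(p x) * fidelity (φ x) σ
      ≤ ∑ x, √(p x) * (√(q x) * √(r x) + √(1 - q x) * √(1 - r x)) := by
        gcongr with x
        rw [← re_trace_mul_one_sub (hφtr x), ← re_trace_mul_one_sub hσtr]
        exact fidelity_le_of_posSemidef_of_posSemidef_one_sub (hφ x) hσ (hΛ x) (hΛ' x)
    _ ≤ √(∑ x, p x * q x) * √(∑ x, r x) +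
        √(∑ x, p x * (1 - q x)) * √(∑ x, (1 - r x)) :=
      Real.sum_sqrt_mul_sqrt_mul_sqrt_add_le _ hp0
        (fun x => (hφ x).re_trace_mul_nonneg (hΛ x))
        (fun x => (hφ x).re_trace_mul_le_one (hφtr x) (hΛ' x))
        (fun x => hσ.re_trace_mul_nonneg (hΛ x)) (fun x => hσ.re_trace_mul_le_one hσtr (hΛ' x))
    _ = _ := by
      simp only [mul_sub, mul_one, Finset.sum_sub_distrib, hp1, hr, Finset.sum_const,
        Finset.card_univ, nsmul_eq_mul, Real.sqrt_one]
      ring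

end Ensemble

end Matrix

/-- **Fidelity–guessing bound (quantum).**
For an ensemble `{p x, φ x}` of `n × n` density matrices indexed by a finite set `X`
with `|X| = m ≥ 2`, and any density matrix `σ`, the fidelities
`F(φ_x, σ) = Tr[(√σ φ_x √σ)^{1/2}]` and the optimal guessing probability
`P_opt = sup over POVMs {Λ x} of ∑ x, p x · Tr[φ_x Λ_x]` satisfy
`(∑ x, √(p x / m) · F(φ_x, σ))² ≤ (1/m)(√P_opt + √(m-1)·√(1-P_opt))²`. -/
theorem fidelity_guessing_bound_quantum {X : Type*} [Fintype X] (m n : ℕ)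
    (hm : Fintype.card X = m)
    (p : X → ℝ) (hp0 : ∀ x, 0 ≤ p x) (hp1 : ∑ x, p x = 1)
    (φ : X → Matrix (Fin n) (Fin n) ℂ)
    (hφ : ∀ x, (φ x).PosSemidef) (hφtr : ∀ x, (φ x).trace = 1)
    (σ : Matrix (Fin n) (Fin n) ℂ) (hσ : σ.PosSemidef) (hσtr : σ.trace = 1)
    (Popt : ℝ)
    (hPopt : Popt = sSup {r : ℝ | ∃ Λ : X → Matrix (Fin n) (Fin n) ℂ,
        (∀ x, (Λ x).PosSemidef) ∧ (∑ x, Λ x = 1) ∧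
          r = ∑ x, p x * ((φ x * Λ x).trace).re})
    (F : X → ℝ)
    (hF : ∀ x, F x =
      ((Matrix.PosSemidef.sqrt
          (show (hσ.sqrt * φ x * hσ.sqrt).PosSemidef from by
            have h := (hφ x).mul_mul_conjTranspose_same hσ.sqrt
            rwa [hσ.posSemidef_sqrt.1.eq] at h)).trace).re) :
    (∑ x, Real.sqrt (p x / m) * F x) ^ 2 ≤
      (1 / (m : ℝ)) *
        (Real.sqrt Popt + Real.sqrt ((m : ℝ) - 1) * Real.sqrt (1 - Popt)) ^ 2 := by
  classical
  have hF' (x : X) : F x = Matrix.fidelity (φ x) σ := by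
    rw [hF, Matrix.PosSemidef.sqrt_eq_cfcSqrt, hσ.sqrt_eq_cfcSqrt]
    rfl
  obtain ⟨x₀⟩ : Nonempty X := by
    by_contra h
    simp [not_nonempty_iff.mp h] at hp1
  have hbound : ∑ x, √(p x) * F x ≤ √Popt + √((m : ℝ) - 1) * √(1 - Popt) := by
    rw [hPopt]
    refine le_apply_csSup_of_continuous (f := fun r => √r + √((m : ℝ) - 1) * √(1 - r))
      (by fun_prop) ⟨_, Pi.single x₀ 1, fun x => ?_, by simp, rfl⟩ ⟨1, ?_⟩ ?_
    · rcases eq_or_ne x x₀ with rfl | hx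
      · simpa using Matrix.PosSemidef.one
      · simpa [hx] using Matrix.PosSemidef.zero
    · rintro _ ⟨Λ, hΛ, hΛ1, rfl⟩
      exact Matrix.sum_mul_re_trace_mul_le_one hp0 hp1 hφ hφtr hΛ hΛ1
    · rintro _ ⟨Λ, hΛ, hΛ1, rfl⟩
      simp only [hF', ← hm]
      exact Matrix.sum_sqrt_mul_fidelity_le hp0 hp1 hφ hφtr hσ hσtr hΛ hΛ1
  have hL : 0 ≤ ∑ x, √(p x) * F x :=
    Finset.sum_nonneg fun x _ =>
      mul_nonneg (Real.sqrt_nonneg _) (hF' x ▸ Matrix.fidelity_nonneg _ _)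
  simp_rw [Real.sqrt_div' _ (Nat.cast_nonneg m), div_mul_eq_mul_div, ← Finset.sum_div, div_pow,
    Real.sq_sqrt (Nat.cast_nonneg _), one_mul]
  gcongr
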